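/- Let (A,≻,≺) be a dendriform algebra. There exists a compatible quadri-algebra structure (↘,↗,↖,↙) on A, i.e. one with x≻y = x↗y + x↘y and x≺y = x↖y + x↙y for all x,y ∈ A, if and only if there exist a bimodule (l_≻,r_≻,l_≺,r_≺,V) of (A,≻,≺) and an invertible O-operator T : V → A of (A,≻,≺) associated to this bimodule. -/

import Mathlib

/-!
A quadri-algebra makes `A` a bimodule of its associated dendriform algebra through
`(L_↘, R_↗, L_↙, R_↖)`, and the identity of `A` is then an invertible O-operator.
Conversely, an O-operator `T : V → A` induces a quadri-algebra on `V`,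
`u ↘ v = l_≻(T u) v`, `u ↗ v = r_≻(T v) u`, `u ↖ v = r_≺(T v) u`, `u ↙ v = l_≺(T u) v`:
each quadri-algebra axiom is a bimodule axiom once `T (u ↗ v + u ↘ v) = T u ≻ T v` and
`T (u ↖ v + u ↙ v) = T u ≺ T v` are used. If `T` is invertible, transporting this structure
to `A` along `T` gives a quadri-algebra compatible with `(≻, ≺)` by the same two identities.
-/

open LinearMap

/-- Dendriform algebra axioms for a pair of bilinear products `succ` (≻) and `prec` (≺). -/
def IsDendriform {K A : Type*} [Field K] [AddCommGroup A] [Module K A]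
    (succ prec : A →ₗ[K] A →ₗ[K] A) : Prop :=
  (∀ x y z : A, prec (prec x y) z = prec x (succ y z + prec y z)) ∧
  (∀ x y z : A, prec (succ x y) z = succ x (prec y z)) ∧
  (∀ x y z : A, succ x (succ y z) = succ (succ x y + prec x y) z)

/-- Bimodule of a dendriform algebra `(A, succ, prec)` on `V`
(maps `l_≻ = ls`, `r_≻ = rs`, `l_≺ = lp`, `r_≺ = rp`). -/
def IsDendBimodule {K A V : Type*} [Field K] [AddCommGroup A] [Module K A]
    [AddCommGroup V] [Module K V] (succ prec : A →ₗ[K] A →ₗ[K] A)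
    (ls rs lp rp : A →ₗ[K] V →ₗ[K] V) : Prop :=
  (∀ x y : A, lp (prec x y) = lp x ∘ₗ (lp y + ls y)) ∧
  (∀ x y : A, rp x ∘ₗ lp y = lp y ∘ₗ (rp x + rs x)) ∧
  (∀ x y : A, rp x ∘ₗ rp y = rp (succ y x + prec y x)) ∧
  (∀ x y : A, lp (succ x y) = ls x ∘ₗ lp y) ∧
  (∀ x y : A, rp x ∘ₗ ls y = ls y ∘ₗ rp x) ∧
  (∀ x y : A, rp x ∘ₗ rs y = rs (prec y x)) ∧
  (∀ x y : A, ls (succ x y + prec x y) = ls x ∘ₗ ls y) ∧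
  (∀ x y : A, rs x ∘ₗ (lp y + ls y) = ls y ∘ₗ rs x) ∧
  (∀ x y : A, rs x ∘ₗ (rs y + rp y) = rs (succ y x))

/-- Quadri-algebra axioms for the four products ↘ (`dse`), ↗ (`dne`), ↖ (`dnw`), ↙ (`dsw`). -/
def IsQuadri {K A : Type*} [Field K] [AddCommGroup A] [Module K A]
    (dse dne dnw dsw : A →ₗ[K] A →ₗ[K] A) : Prop :=
  (∀ x y z : A, dnw (dnw x y) z = dnw x (dse y z + dne y z + dnw y z + dsw y z)) ∧
  (∀ x y z : A, dnw (dne x y) z = dne x (dnw y z + dsw y z)) ∧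
  (∀ x y z : A, dne (dne x y + dnw x y) z = dne x (dne y z + dse y z)) ∧
  (∀ x y z : A, dnw (dsw x y) z = dsw x (dne y z + dnw y z)) ∧
  (∀ x y z : A, dnw (dse x y) z = dse x (dnw y z)) ∧
  (∀ x y z : A, dne (dse x y + dsw x y) z = dse x (dne y z)) ∧
  (∀ x y z : A, dsw (dnw x y + dsw x y) z = dsw x (dse y z + dsw y z)) ∧
  (∀ x y z : A, dsw (dne x y + dse x y) z = dse x (dsw y z)) ∧
  (∀ x y z : A, dse (dse x y + dne x y + dnw x y + dsw x y) z = dse x (dse y z))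

structure IsDendOOperator {K A V : Type*} [Field K] [AddCommGroup A] [Module K A]
    [AddCommGroup V] [Module K V] (succ prec : A →ₗ[K] A →ₗ[K] A)
    (ls rs lp rp : A →ₗ[K] V →ₗ[K] V) (T : V →ₗ[K] A) : Prop where
  map_succ : ∀ u v : V, succ (T u) (T v) = T (ls (T u) v + rs (T v) u)
  map_prec : ∀ u v : V, prec (T u) (T v) = T (lp (T u) v + rp (T v) u)

section

variable {K A V : Type*} [Field K] [AddCommGroup A] [Module K A] [AddCommGroup V] [Module K V]

theorem IsQuadri.isDendBimodule {dse dne dnw dsw : A →ₗ[K] A →ₗ[K] A}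
    (h : IsQuadri dse dne dnw dsw) :
    IsDendBimodule (dne + dse) (dnw + dsw) dse dne.flip dsw dnw.flip := by
  obtain ⟨q1, q2, q3, q4, q5, q6, q7, q8, q9⟩ := h
  refine ⟨fun x y => ?_, fun x y => ?_, fun x y => ?_, fun x y => ?_, fun x y => ?_,
    fun x y => ?_, fun x y => ?_, fun x y => ?_, fun x y => ?_⟩ <;> ext v <;>
    simp only [comp_apply, LinearMap.add_apply, flip_apply]
  · rw [q7, add_comm (dse y v)]
  · rw [q4, add_comm (dne v x)]
  · rw [q1]; congr 1; abel
  · rw [q8]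
  · exact q5 y v x
  · rw [q2]
  · rw [← q9]; congr 2; abel
  · rw [add_comm (dsw y v), q6]
  · rw [q3]

theorem IsDendOOperator.isQuadri {succ prec : A →ₗ[K] A →ₗ[K] A}
    {ls rs lp rp : A →ₗ[K] V →ₗ[K] V} {T : V →ₗ[K] A}
    (hM : IsDendBimodule succ prec ls rs lp rp) (hT : IsDendOOperator succ prec ls rs lp rp T) :
    IsQuadri (ls ∘ₗ T) (rs ∘ₗ T).flip (rp ∘ₗ T).flip (lp ∘ₗ T) := by
  obtain ⟨b1, b2, b3, b4, b5, b6, b7, b8, b9⟩ := hM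
  have hsum : ∀ u v : V, T (ls (T u) v + rs (T v) u + rp (T v) u + lp (T u) v) =
      succ (T u) (T v) + prec (T u) (T v) := fun u v => by
    rw [hT.map_succ, hT.map_prec, ← map_add]; congr 1; abel
  refine ⟨fun u v w => ?_, fun u v w => ?_, fun u v w => ?_, fun u v w => ?_, fun u v w => ?_,
    fun u v w => ?_, fun u v w => ?_, fun u v w => ?_, fun u v w => ?_⟩ <;>
    simp only [comp_apply, flip_apply]
  · rw [hsum]; exact LinearMap.congr_fun (b3 _ _) u
  · rw [add_comm, ← hT.map_prec]; exact LinearMap.congr_fun (b6 _ _) u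
  · rw [add_comm (rs (T w) v), ← hT.map_succ, ← b9, comp_apply, LinearMap.add_apply]
  · rw [add_comm]; exact LinearMap.congr_fun (b2 _ _) v
  · exact LinearMap.congr_fun (b5 _ _) v
  · rw [add_comm]; exact LinearMap.congr_fun (b8 _ _) v
  · rw [add_comm (rp _ _), ← hT.map_prec, add_comm]; exact LinearMap.congr_fun (b1 _ _) w
  · rw [add_comm (rs _ _), ← hT.map_succ]; exact LinearMap.congr_fun (b4 _ _) w
  · rw [hsum]; exact LinearMap.congr_fun (b7 _ _) w

theorem IsQuadri.arrowCongr {dse dne dnw dsw : V →ₗ[K] V →ₗ[K] V}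
    (h : IsQuadri dse dne dnw dsw) (E : V ≃ₗ[K] A) :
    IsQuadri (E.arrowCongr (E.arrowCongr E) dse) (E.arrowCongr (E.arrowCongr E) dne)
      (E.arrowCongr (E.arrowCongr E) dnw) (E.arrowCongr (E.arrowCongr E) dsw) := by
  obtain ⟨q1, q2, q3, q4, q5, q6, q7, q8, q9⟩ := h
  simp only [IsQuadri, LinearEquiv.arrowCongr_apply, ← map_add, LinearEquiv.symm_apply_apply]
  exact ⟨fun _ _ _ => by rw [q1], fun _ _ _ => by rw [q2], fun _ _ _ => by rw [q3],
    fun _ _ _ => by rw [q4], fun _ _ _ => by rw [q5], fun _ _ _ => by rw [q6],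
    fun _ _ _ => by rw [q7], fun _ _ _ => by rw [q8], fun _ _ _ => by rw [q9]⟩

end

theorem compatible_quadri_iff_invertible_Ooperator_general
    {K : Type*} {A : Type u} [Field K] [AddCommGroup A] [Module K A]
    (succ prec : A →ₗ[K] A →ₗ[K] A) :
    (∃ dse dne dnw dsw : A →ₗ[K] A →ₗ[K] A,
        IsQuadri dse dne dnw dsw ∧
        (∀ x y : A, succ x y = dne x y + dse x y) ∧
        (∀ x y : A, prec x y = dnw x y + dsw x y)) ↔
    (∃ (V : Type u) (_ : AddCommGroup V) (_ : Module K V)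
        (ls rs lp rp : A →ₗ[K] V →ₗ[K] V) (T : V →ₗ[K] A),
        IsDendBimodule succ prec ls rs lp rp ∧
        Function.Bijective T ∧
        (∀ u v : V, succ (T u) (T v) = T (ls (T u) v + rs (T v) u)) ∧
        (∀ u v : V, prec (T u) (T v) = T (lp (T u) v + rp (T v) u))) := by
  constructor
  · rintro ⟨dse, dne, dnw, dsw, hQ, hs, hp⟩
    obtain rfl : succ = dne + dse := by ext x y; exact hs x y
    obtain rfl : prec = dnw + dsw := by ext x y; exact hp x y
    exact ⟨A, inferInstance, inferInstance, dse, dne.flip, dsw, dnw.flip, LinearMap.id,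
      hQ.isDendBimodule, Function.bijective_id, fun _ _ => add_comm _ _, fun _ _ => add_comm _ _⟩
  · rintro ⟨V, _, _, ls, rs, lp, rp, T, hM, hbij, hs, hp⟩
    let E := LinearEquiv.ofBijective T hbij
    let c : (V →ₗ[K] V →ₗ[K] V) ≃ₗ[K] (A →ₗ[K] A →ₗ[K] A) := E.arrowCongr (E.arrowCongr E)
    refine ⟨c (ls ∘ₗ T), c (rs ∘ₗ T).flip, c (rp ∘ₗ T).flip, c (lp ∘ₗ T),
      (IsDendOOperator.isQuadri hM ⟨hs, hp⟩).arrowCongr E, ?_, ?_⟩ <;>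
    · intro x y
      obtain ⟨u, rfl⟩ := hbij.2 x
      obtain ⟨v, rfl⟩ := hbij.2 y
      simp [c, E, hs, hp, add_comm]

/-- Corollary 3.4.10: a dendriform algebra `(A, ≻, ≺)` admits a compatible
quadri-algebra structure (with `x≻y = x↗y + x↘y` and `x≺y = x↖y + x↙y`) if and only
if there is an invertible `O`-operator of `(A, ≻, ≺)` associated to some bimodule. -/
theorem compatible_quadri_iff_invertible_Ooperator
    {K : Type*} {A : Type u} [Field K] [CharZero K] [AddCommGroup A] [Module K A]
    (succ prec : A →ₗ[K] A →ₗ[K] A)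
    (hdend : IsDendriform succ prec) :
    (∃ dse dne dnw dsw : A →ₗ[K] A →ₗ[K] A,
        IsQuadri dse dne dnw dsw ∧
        (∀ x y : A, succ x y = dne x y + dse x y) ∧
        (∀ x y : A, prec x y = dnw x y + dsw x y)) ↔
    (∃ (V : Type u) (_ : AddCommGroup V) (_ : Module K V)
        (ls rs lp rp : A →ₗ[K] V →ₗ[K] V) (T : V →ₗ[K] A),
        IsDendBimodule succ prec ls rs lp rp ∧
        Function.Bijective T ∧
        (∀ u v : V, succ (T u) (T v) = T (ls (T u) v + rs (T v) u)) ∧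
        (∀ u v : V, prec (T u) (T v) = T (lp (T u) v + rp (T v) u))) :=
  compatible_quadri_iff_invertible_Ooperator_general succ prec
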